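/- arXiv:2005.01257 — 2 statements merged into one kernel-verified Lean document; each statement's English description precedes it below -/
import Mathlib

section
/- With γ, ρ, ψ, φ_θ, D_γ as above, there exists a constant C > 0 such that for all θ ∈ D_γ, all z ∈ ℂ with |z| > 1 and π/2 < arg z < π, and all (ξ, ξ*) ∈ ℝⁿ × ℝⁿ: |φ_θ(ξ)·φ_θ(ξ) - z - i (Dφ_θ(ξ)^{-2} ξ*)·ξ*| ≥ C (1 + |ξ|² + |ξ*|²). -/
/-!
Write `r = ‖ξ‖`, `μ = 1 + θ ρ(r)/r`, `μ' = 1 + θ ρ'(r)` and let `Π` be the orthogonal projection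
onto `ℝ ξ`. Then `φ_θ(ξ)·φ_θ(ξ) = μ² r²` and `Dφ_θ(ξ) = μ (1 - Π) + μ' Π`, so the symbol is
`a - z - i b` with `a = μ² r²` and `b = μ⁻² |(1 - Π) ξ*|² + μ'⁻² |Π ξ*|²`.

Since `ρ` is eventually constant, `ρ'` attains a maximum `B < γ⁻¹ tan(π/8)` on `[0, ∞)`, and then
`ρ(r)/r ≤ B` as well. For `θ ∈ D_γ` this puts `μ` and `μ'` in the sector `|arg| ≤ arctan l` with
`l = γ B < tan(π/8)`, hence `a` and `b` lie in the sector `|arg| ≤ arctan k` with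
`k = 2l/(1 - l²) < 1`, i.e. strictly inside `|arg| < π/4`, with `Re a ≳ r²` and `Re b ≳ |ξ*|²`.
For `π/2 < arg z < π` the point `-z` lies in the quadrant `Re ≥ 0 ≥ Im`. So `a`, `-z` and `-i b`
all lie in the half-plane `Re w - Im w ≥ 0`, and testing the symbol against this direction gives
`2 |a - z - i b| ≥ (1 - k) (Re a + Re b) + |z|`.
-/

open MeasureTheory Complex Real Filter Metric
open scoped Classical

noncomputable section

abbrev Rn (n : ℕ) := EuclideanSpace ℝ (Fin n)
abbrev L2 (n : ℕ) := MeasureTheory.Lp ℂ 2 (volume : Measure (Rn n))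
abbrev Op (n : ℕ) := L2 n →L[ℂ] L2 n

/-- The Laplacian of a Schwartz test function. -/
def schwartzLap {n : ℕ} (φ : SchwartzMap (Rn n) ℂ) (x : Rn n) : ℂ :=
  ∑ i : Fin n, iteratedFDeriv ℝ 2 (⇑φ) x ![EuclideanSpace.single i 1, EuclideanSpace.single i 1]

/-- `(-Δ + W - z) u = f` in the sense of distributions, for `u, f ∈ L²`. -/
def IsWeakSolution {n : ℕ} (W : Rn n → ℂ) (z : ℂ) (u f : L2 n) : Prop :=
  ∀ φ : SchwartzMap (Rn n) ℂ,
    ∫ x, u x * (-(schwartzLap φ x) + (W x - z) * φ x) = ∫ x, f x * φ x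

/-- `T` is the (bounded, everywhere defined) resolvent `(-Δ + W - z)⁻¹` on `L²`. -/
def IsResolvent {n : ℕ} (W : Rn n → ℂ) (z : ℂ) (T : Op n) : Prop :=
  (∀ f, IsWeakSolution W z (T f) f) ∧ ∀ u f, IsWeakSolution W z u f → u = T f

/-- `T` is the operator of multiplication by the (bounded) function `g`. -/
def IsMulOp {n : ℕ} (g : Rn n → ℂ) (T : Op n) : Prop :=
  ∀ u : L2 n, (⇑(T u) : Rn n → ℂ) =ᵐ[volume] fun x => g x * u x

/-- The sector `-π/8 < arg λ < 7π/8`. -/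
def Sector : Set ℂ := {z : ℂ | -(π/8) < z.arg ∧ z.arg < 7*π/8}

/-- The rectangle `Ω = (a', a) + i(-γ', b)`. -/
def Rect (a' a γ' b : ℝ) : Set ℂ := {z : ℂ | z.re ∈ Set.Ioo a' a ∧ z.im ∈ Set.Ioo (-γ') b}

/-- `ψ(ξ) = ρ(|ξ|) ξ / |ξ|`. -/
def psiR {n : ℕ} (ρ : ℝ → ℝ) (ξ : Rn n) : Rn n :=
  if ξ = 0 then 0 else (ρ ‖ξ‖ / ‖ξ‖) • ξ

/-- The deformation `φ_θ(ξ) = ξ + θ ψ(ξ)`, with values in `ℂⁿ`. -/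
def phiTheta {n : ℕ} (ρ : ℝ → ℝ) (θ : ℂ) (ξ : Rn n) : Fin n → ℂ :=
  fun j => (ξ j : ℂ) + θ * (psiR ρ ξ j : ℂ)

/-- The bilinear (non-Hermitian) dot product on `ℂⁿ`. -/
def dotC {n : ℕ} (v w : Fin n → ℂ) : ℂ := ∑ j, v j * w j

/-- The Jacobian matrix `Dψ(ξ) = (ρ(|ξ|)/|ξ|) I + (ρ'(|ξ|)/|ξ|² - ρ(|ξ|)/|ξ|³) ξξᵀ`. -/
def DpsiMat {n : ℕ} (ρ : ℝ → ℝ) (ξ : Rn n) : Matrix (Fin n) (Fin n) ℝ :=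
  if ξ = 0 then 0 else
    (ρ ‖ξ‖ / ‖ξ‖) • (1 : Matrix (Fin n) (Fin n) ℝ)
      + (deriv ρ ‖ξ‖ / ‖ξ‖ ^ 2 - ρ ‖ξ‖ / ‖ξ‖ ^ 3) • Matrix.of fun i j => ξ i * ξ j

/-- The Jacobian matrix `Dφ_θ(ξ) = I + θ Dψ(ξ)` (a complex symmetric matrix). -/
def DphiMat {n : ℕ} (ρ : ℝ → ℝ) (θ : ℂ) (ξ : Rn n) : Matrix (Fin n) (Fin n) ℂ :=
  1 + θ • (DpsiMat ρ ξ).map Complex.ofReal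

/-- The quadratic form `(Dφ_θ(ξ)⁻² ξ*)·ξ*` with `Dφ_θ⁻² = (Dφ_θ⁻¹)ᵀ Dφ_θ⁻¹`. -/
def qForm {n : ℕ} (ρ : ℝ → ℝ) (θ : ℂ) (ξ ξs : Rn n) : ℂ :=
  dotC ((((DphiMat ρ θ ξ)⁻¹).transpose * (DphiMat ρ θ ξ)⁻¹).mulVec fun j => (ξs j : ℂ))
    (fun j => (ξs j : ℂ))

/-- The region `D_γ = {θ ∈ ℂ : |Re θ| + |Im θ| < γ}`. -/
def Dgamma (γ : ℝ) : Set ℂ := {θ : ℂ | |θ.re| + |θ.im| < γ}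

section

open Matrix

/-- The closed sector `|arg w| ≤ arctan k` (for `0 < k`). -/
def InSector (k : ℝ) (w : ℂ) : Prop := |w.im| ≤ k * w.re

namespace InSector

variable {k : ℝ} {v w : ℂ}

theorem add (hv : InSector k v) (hw : InSector k w) : InSector k (v + w) := by
  unfold InSector at *
  rw [add_im, add_re, mul_add]
  exact (abs_add_le _ _).trans (add_le_add hv hw)

theorem mul_ofReal (hw : InSector k w) {c : ℝ} (hc : 0 ≤ c) : InSector k (w * c) := by
  unfold InSector at *
  rw [im_mul_ofReal, re_mul_ofReal, abs_mul, abs_of_nonneg hc, ← mul_assoc]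
  exact mul_le_mul_of_nonneg_right hw hc

theorem one_sub_mul_re_le_re_sub_im (hw : InSector k w) : (1 - k) * w.re ≤ w.re - w.im := by
  have := le_abs_self w.im
  unfold InSector at hw
  linarith

theorem one_sub_mul_re_le_re_add_im (hw : InSector k w) : (1 - k) * w.re ≤ w.re + w.im := by
  have := neg_abs_le w.im
  unfold InSector at hw
  linarith

theorem one_sub_sq_mul_sq_le_re_sq (hw : InSector k w) : (1 - k ^ 2) * w.re ^ 2 ≤ (w ^ 2).re := by
  have him : w.im ^ 2 ≤ (k * w.re) ^ 2 := by
    rw [← sq_abs]; exact pow_le_pow_left₀ (abs_nonneg _) hw 2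
  rw [sq w, mul_re]
  nlinarith

theorem sq {l : ℝ} (hw : InSector l w) (hl0 : 0 ≤ l) (hl1 : l < 1) (hre : 0 ≤ w.re) :
    InSector (2 * l / (1 - l ^ 2)) (w ^ 2) := by
  have hpos : 0 < 1 - l ^ 2 := by nlinarith
  have hre2 := hw.one_sub_sq_mul_sq_le_re_sq
  unfold InSector at *
  have him : |(w ^ 2).im| = 2 * w.re * |w.im| := by
    rw [pow_two, mul_im, mul_comm w.im, ← two_mul, abs_mul, abs_mul, abs_two,
      abs_of_nonneg hre, mul_assoc]
  rw [him, div_mul_eq_mul_div, le_div_iff₀ hpos]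
  have := mul_le_mul_of_nonneg_left hw (by positivity : 0 ≤ 2 * w.re * (1 - l ^ 2))
  nlinarith

theorem inv (hw : InSector k w) : InSector k w⁻¹ := by
  unfold InSector at *
  rw [inv_im, inv_re, neg_div, abs_neg, abs_div, abs_of_nonneg (normSq_nonneg w), mul_div_assoc']
  exact div_le_div_of_nonneg_right hw (normSq_nonneg w)

theorem one_div_le_re_inv (hw : InSector k w) (hre : 0 < w.re) :
    1 / ((1 + k ^ 2) * w.re) ≤ (w⁻¹).re := by
  have him : w.im ^ 2 ≤ (k * w.re) ^ 2 := by
    rw [← sq_abs]; exact pow_le_pow_left₀ (abs_nonneg _) hw 2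
  have hns : normSq w ≤ (1 + k ^ 2) * w.re ^ 2 := by rw [normSq_apply]; nlinarith
  have hns_pos : 0 < normSq w := by rw [normSq_apply]; nlinarith
  rw [inv_re, div_le_div_iff₀ (by positivity) hns_pos]
  nlinarith

theorem le_two_mul_norm_sub_sub_I_mul {a b z : ℂ} (ha : InSector k a) (hb : InSector k b)
    (hzre : z.re ≤ 0) (hzim : 0 ≤ z.im) :
    (1 - k) * (a.re + b.re) + ‖z‖ ≤ 2 * ‖a - z - I * b‖ := by
  have hS : (a - z - I * b).re - (a - z - I * b).im
      = (a.re - a.im) + (b.re + b.im) + (z.im - z.re) := by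
    simp only [sub_re, sub_im, mul_re, mul_im, I_re, I_im]
    ring
  have hz := norm_le_abs_re_add_abs_im z
  rw [abs_of_nonpos hzre, abs_of_nonneg hzim] at hz
  linarith [ha.one_sub_mul_re_le_re_sub_im, hb.one_sub_mul_re_le_re_add_im,
    le_abs_self (a - z - I * b).re, neg_abs_le (a - z - I * b).im,
    abs_re_le_norm (a - z - I * b), abs_im_le_norm (a - z - I * b)]

end InSector

section OneAddMulOfReal

variable {θ : ℂ} {s l : ℝ}

theorem re_one_add_mul_ofReal_mem_Icc (hs : 0 ≤ s) (hθs : (|θ.re| + |θ.im|) * s ≤ l) :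
    (1 + θ * s).re ∈ Set.Icc (1 - l) (1 + l) := by
  have h : |θ.re * s| ≤ l := by
    rw [abs_mul, abs_of_nonneg hs]; nlinarith [abs_nonneg θ.im]
  rw [add_re, one_re, re_mul_ofReal]
  constructor <;> linarith [abs_le.mp h]

theorem inSector_one_add_mul_ofReal (hs : 0 ≤ s) (hθs : (|θ.re| + |θ.im|) * s ≤ l)
    (hl1 : l ≤ 1) : InSector l (1 + θ * s) := by
  have hl0 : 0 ≤ l := le_trans (by positivity) hθs
  have hre : -(|θ.re| * s) ≤ θ.re * s := by nlinarith [neg_abs_le θ.re]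
  unfold InSector
  rw [add_im, one_im, zero_add, im_mul_ofReal, abs_mul, abs_of_nonneg hs, add_re, one_re,
    re_mul_ofReal]
  nlinarith [mul_le_mul_of_nonneg_left hre hl0,
    mul_nonneg (sub_nonneg.mpr hl1) (mul_nonneg (abs_nonneg θ.re) hs)]

theorem inSector_sq_one_add_mul_ofReal (hs : 0 ≤ s) (hθs : (|θ.re| + |θ.im|) * s ≤ l)
    (hl1 : l < 1) : InSector (2 * l / (1 - l ^ 2)) ((1 + θ * s) ^ 2) :=
  (inSector_one_add_mul_ofReal hs hθs hl1.le).sq (le_trans (by positivity) hθs) hl1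
    (by linarith [(re_one_add_mul_ofReal_mem_Icc hs hθs).1])

theorem le_re_sq_one_add_mul_ofReal (hs : 0 ≤ s) (hθs : (|θ.re| + |θ.im|) * s ≤ l)
    (hl1 : l ≤ 1) : (1 - l ^ 2) * (1 - l) ^ 2 ≤ ((1 + θ * s) ^ 2).re := by
  have hl0 : 0 ≤ l := le_trans (by positivity) hθs
  have hre := (re_one_add_mul_ofReal_mem_Icc hs hθs).1
  have hsq : (1 - l) ^ 2 ≤ (1 + θ * s).re ^ 2 := pow_le_pow_left₀ (by linarith) hre 2
  calc (1 - l ^ 2) * (1 - l) ^ 2 ≤ (1 - l ^ 2) * (1 + θ * s).re ^ 2 :=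
        mul_le_mul_of_nonneg_left hsq (by nlinarith)
    _ ≤ _ := (inSector_one_add_mul_ofReal hs hθs hl1).one_sub_sq_mul_sq_le_re_sq

theorem le_re_inv_sq_one_add_mul_ofReal (hs : 0 ≤ s) (hθs : (|θ.re| + |θ.im|) * s ≤ l)
    (hl1 : l < 1) :
    1 / ((1 + (2 * l / (1 - l ^ 2)) ^ 2) * (1 + l) ^ 2) ≤ (((1 + θ * s) ^ 2)⁻¹).re := by
  have hl0 : 0 ≤ l := le_trans (by positivity) hθs
  have hpos : 0 < ((1 + θ * s) ^ 2).re :=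
    lt_of_lt_of_le (mul_pos (by nlinarith) (by nlinarith))
      (le_re_sq_one_add_mul_ofReal hs hθs hl1.le)
  have hle : ((1 + θ * s) ^ 2).re ≤ (1 + l) ^ 2 := by
    rw [pow_two (1 + θ * s), mul_re]
    have hre := re_one_add_mul_ofReal_mem_Icc hs hθs
    nlinarith [mul_self_nonneg (1 + θ * s).im, hre.1, hre.2]
  refine le_trans ?_ ((inSector_sq_one_add_mul_ofReal hs hθs hl1).one_div_le_re_inv hpos)
  gcongr

end OneAddMulOfReal

theorem IsIdempotentElem.smul_one_sub_add_smul_mul {R A : Type*} [CommRing R] [Ring A]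
    [Algebra R A] {P : A} (hP : IsIdempotentElem P) (a b c d : R) :
    (a • (1 - P) + b • P) * (c • (1 - P) + d • P) = (a * c) • (1 - P) + (b * d) • P := by
  simp only [add_mul, mul_add, smul_mul_smul_comm, hP.one_sub.eq, hP.eq, hP.mul_one_sub_self,
    hP.one_sub_mul_self, smul_zero, add_zero, zero_add]

theorem Matrix.inv_smul_one_sub_add_smul {ι K : Type*} [Fintype ι] [DecidableEq ι] [Field K]
    {P : Matrix ι ι K} (hP : IsIdempotentElem P) {a b : K} (ha : a ≠ 0) (hb : b ≠ 0) :
    (a • (1 - P) + b • P)⁻¹ = a⁻¹ • (1 - P) + b⁻¹ • P :=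
  Matrix.inv_eq_right_inv <| by
    rw [hP.smul_one_sub_add_smul_mul, mul_inv_cancel₀ ha, mul_inv_cancel₀ hb, one_smul,
      one_smul, sub_add_cancel]

theorem Matrix.smul_one_sub_add_smul_mulVec_dotProduct {ι R : Type*} [Fintype ι] [DecidableEq ι]
    [CommRing R] (P : Matrix ι ι R) (a b : R) (v : ι → R) :
    ((a • (1 - P) + b • P) *ᵥ v) ⬝ᵥ v = a * (v ⬝ᵥ v - (P *ᵥ v) ⬝ᵥ v) + b * ((P *ᵥ v) ⬝ᵥ v) := by
  simp only [Matrix.add_mulVec, Matrix.smul_mulVec, Matrix.sub_mulVec, Matrix.one_mulVec,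
    add_dotProduct, smul_dotProduct, sub_dotProduct, smul_eq_mul]

section RadialProj

variable {ι : Type*} [Fintype ι]

theorem EuclideanSpace.dotProduct_self_eq_norm_sq (ξ : EuclideanSpace ℝ ι) :
    ⇑ξ ⬝ᵥ ⇑ξ = ‖ξ‖ ^ 2 := by
  rw [EuclideanSpace.real_norm_sq_eq, dotProduct]
  simp only [pow_two]

/-- Orthogonal projection onto `ℝ ξ`; it is `0` for `ξ = 0`. -/
def radialProj (ξ : EuclideanSpace ℝ ι) : Matrix ι ι ℝ :=
  (‖ξ‖ ^ 2)⁻¹ • Matrix.vecMulVec ξ ξ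

theorem isIdempotentElem_radialProj (ξ : EuclideanSpace ℝ ι) :
    IsIdempotentElem (radialProj ξ) := by
  rcases eq_or_ne ξ 0 with rfl | hξ
  · simp [IsIdempotentElem, radialProj]
  have hr : ‖ξ‖ ^ 2 ≠ 0 := by positivity
  rw [IsIdempotentElem, radialProj, smul_mul_smul_comm, Matrix.vecMulVec_mul_vecMulVec,
    EuclideanSpace.dotProduct_self_eq_norm_sq, Matrix.vecMulVec_smul, smul_smul, mul_assoc,
    inv_mul_cancel₀ hr, mul_one]

theorem transpose_radialProj (ξ : EuclideanSpace ℝ ι) : (radialProj ξ)ᵀ = radialProj ξ := by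
  rw [radialProj, Matrix.transpose_smul, Matrix.transpose_vecMulVec]

theorem radialProj_mulVec_dotProduct (ξ v : EuclideanSpace ℝ ι) :
    (radialProj ξ *ᵥ v) ⬝ᵥ v = inner ℝ ξ v ^ 2 / ‖ξ‖ ^ 2 := by
  rw [radialProj, Matrix.smul_mulVec, Matrix.vecMulVec_mulVec, op_smul_eq_smul, smul_dotProduct,
    smul_dotProduct, EuclideanSpace.inner_eq_star_dotProduct, star_trivial, dotProduct_comm ⇑v]
  simp only [smul_eq_mul]
  ring

end RadialProj

theorem sq_inner_div_sq_norm_le {E : Type*} [NormedAddCommGroup E] [InnerProductSpace ℝ E]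
    (x y : E) : inner ℝ x y ^ 2 / ‖x‖ ^ 2 ≤ ‖y‖ ^ 2 :=
  div_le_of_le_mul₀ (sq_nonneg _) (sq_nonneg _) <| by
    rw [← mul_pow, ← sq_abs, mul_comm]
    exact pow_le_pow_left₀ (abs_nonneg _) (abs_real_inner_le_norm x y) 2

section Symbol

variable {n : ℕ} (ρ : ℝ → ℝ) (θ : ℂ)

theorem dotC_eq_dotProduct (v w : Fin n → ℂ) : dotC v w = v ⬝ᵥ w := rfl

theorem psiR_eq_smul (ξ : Rn n) : psiR ρ ξ = (ρ ‖ξ‖ / ‖ξ‖) • ξ := by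
  rcases eq_or_ne ξ 0 with rfl | hξ
  · simp [psiR]
  · rw [psiR, if_neg hξ]

theorem dotC_phiTheta_self (ξ : Rn n) :
    dotC (phiTheta ρ θ ξ) (phiTheta ρ θ ξ) = (1 + θ * ↑(ρ ‖ξ‖ / ‖ξ‖)) ^ 2 * ↑(‖ξ‖ ^ 2) := by
  have hφ : phiTheta ρ θ ξ = (1 + θ * ↑(ρ ‖ξ‖ / ‖ξ‖)) • (ofRealHom ∘ ξ) := by
    ext j
    simp only [phiTheta, psiR_eq_smul, PiLp.smul_apply, smul_eq_mul, Pi.smul_apply,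
      Function.comp_apply, ofRealHom_eq_coe, ofReal_mul]
    ring
  rw [dotC_eq_dotProduct, hφ, smul_dotProduct, dotProduct_smul, ← RingHom.map_dotProduct,
    EuclideanSpace.dotProduct_self_eq_norm_sq, smul_eq_mul, smul_eq_mul, ofRealHom_eq_coe]
  ring

theorem DpsiMat_eq (ξ : Rn n) :
    DpsiMat ρ ξ = (ρ ‖ξ‖ / ‖ξ‖) • (1 - radialProj ξ) + deriv ρ ‖ξ‖ • radialProj ξ := by
  rcases eq_or_ne ξ 0 with rfl | hξ
  · simp [DpsiMat, radialProj]
  rw [DpsiMat, if_neg hξ, radialProj]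
  have hr : ‖ξ‖ ≠ 0 := norm_ne_zero_iff.mpr hξ
  change _ + _ • vecMulVec _ _ = _
  rw [smul_sub, smul_smul, smul_smul]
  have h1 : deriv ρ ‖ξ‖ / ‖ξ‖ ^ 2 - ρ ‖ξ‖ / ‖ξ‖ ^ 3
      = deriv ρ ‖ξ‖ * (‖ξ‖ ^ 2)⁻¹ - ρ ‖ξ‖ / ‖ξ‖ * (‖ξ‖ ^ 2)⁻¹ := by
    field_simp
  rw [h1, sub_smul]
  abel

theorem DphiMat_eq (ξ : Rn n) :
    DphiMat ρ θ ξ = (1 + θ * ↑(ρ ‖ξ‖ / ‖ξ‖)) • (1 - (radialProj ξ).map ofReal)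
      + (1 + θ * ↑(deriv ρ ‖ξ‖)) • (radialProj ξ).map ofReal := by
  rw [DphiMat, DpsiMat_eq, Matrix.map_add _ ofReal_add, Matrix.map_smul' _ _ _ ofReal_mul,
    Matrix.map_smul' _ _ _ ofReal_mul, Matrix.map_sub _ ofReal_sub,
    Matrix.map_one _ ofReal_zero ofReal_one]
  module

theorem qForm_eq (ξ ξs : Rn n) (hp : 1 + θ * ↑(ρ ‖ξ‖ / ‖ξ‖) ≠ 0)
    (hp' : 1 + θ * ↑(deriv ρ ‖ξ‖) ≠ 0) :
    qForm ρ θ ξ ξs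
      = ((1 + θ * ↑(ρ ‖ξ‖ / ‖ξ‖)) ^ 2)⁻¹ * ↑(‖ξs‖ ^ 2 - inner ℝ ξ ξs ^ 2 / ‖ξ‖ ^ 2)
        + ((1 + θ * ↑(deriv ρ ‖ξ‖)) ^ 2)⁻¹ * ↑(inner ℝ ξ ξs ^ 2 / ‖ξ‖ ^ 2) := by
  have hP : IsIdempotentElem ((radialProj ξ).map ofReal) := by
    have h := congrArg (fun M : Matrix (Fin n) (Fin n) ℝ => M.map ofRealHom)
      (isIdempotentElem_radialProj ξ).eq
    rwa [Matrix.map_mul] at h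
  have hv : (fun j => (ξs j : ℂ)) = ofRealHom ∘ ξs := rfl
  have hPv : ((radialProj ξ).map ofReal *ᵥ (ofRealHom ∘ ξs)) ⬝ᵥ (ofRealHom ∘ ξs)
      = ↑(inner ℝ ξ ξs ^ 2 / ‖ξ‖ ^ 2) := by
    rw [← radialProj_mulVec_dotProduct, ← ofRealHom_eq_coe, RingHom.map_dotProduct]
    congr 1
    ext j
    exact (RingHom.map_mulVec ofRealHom _ _ j).symm
  rw [qForm, DphiMat_eq, Matrix.inv_smul_one_sub_add_smul hP hp hp', Matrix.transpose_add,
    Matrix.transpose_smul, Matrix.transpose_smul, Matrix.transpose_sub, Matrix.transpose_one,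
    ← Matrix.transpose_map, transpose_radialProj, hP.smul_one_sub_add_smul_mul, dotC_eq_dotProduct,
    hv, Matrix.smul_one_sub_add_smul_mulVec_dotProduct, hPv, ← RingHom.map_dotProduct,
    EuclideanSpace.dotProduct_self_eq_norm_sq, ofRealHom_eq_coe, ← inv_pow, ← inv_pow,
    ofReal_sub]
  ring

end Symbol

section SymbolSectors

variable {n : ℕ} {ρ : ℝ → ℝ} {θ : ℂ} {l : ℝ}

theorem inSector_and_le_re_dotC_phiTheta_self (ξ : Rn n) (hs : 0 ≤ ρ ‖ξ‖ / ‖ξ‖)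
    (hθs : (|θ.re| + |θ.im|) * (ρ ‖ξ‖ / ‖ξ‖) ≤ l) (hl1 : l < 1) :
    InSector (2 * l / (1 - l ^ 2)) (dotC (phiTheta ρ θ ξ) (phiTheta ρ θ ξ)) ∧
      (1 - l ^ 2) * (1 - l) ^ 2 * ‖ξ‖ ^ 2 ≤ (dotC (phiTheta ρ θ ξ) (phiTheta ρ θ ξ)).re := by
  rw [dotC_phiTheta_self, re_mul_ofReal]
  exact ⟨(inSector_sq_one_add_mul_ofReal hs hθs hl1).mul_ofReal (sq_nonneg _),
    mul_le_mul_of_nonneg_right (le_re_sq_one_add_mul_ofReal hs hθs hl1.le) (sq_nonneg _)⟩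

theorem inSector_and_le_re_qForm (ξ ξs : Rn n) (hs : 0 ≤ ρ ‖ξ‖ / ‖ξ‖)
    (hθs : (|θ.re| + |θ.im|) * (ρ ‖ξ‖ / ‖ξ‖) ≤ l) (hs' : 0 ≤ deriv ρ ‖ξ‖)
    (hθs' : (|θ.re| + |θ.im|) * deriv ρ ‖ξ‖ ≤ l) (hl1 : l < 1) :
    InSector (2 * l / (1 - l ^ 2)) (qForm ρ θ ξ ξs) ∧
      1 / ((1 + (2 * l / (1 - l ^ 2)) ^ 2) * (1 + l) ^ 2) * ‖ξs‖ ^ 2 ≤ (qForm ρ θ ξ ξs).re := by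
  have hne : ∀ {s : ℝ}, 0 ≤ s → (|θ.re| + |θ.im|) * s ≤ l → 1 + θ * s ≠ 0 := fun h₀ h₁ h => by
    have := (re_one_add_mul_ofReal_mem_Icc h₀ h₁).1
    rw [h, zero_re] at this
    linarith
  have ht : 0 ≤ inner ℝ ξ ξs ^ 2 / ‖ξ‖ ^ 2 := by positivity
  have hst : 0 ≤ ‖ξs‖ ^ 2 - inner ℝ ξ ξs ^ 2 / ‖ξ‖ ^ 2 :=
    sub_nonneg.mpr (sq_inner_div_sq_norm_le ξ ξs)
  rw [qForm_eq ρ θ ξ ξs (hne hs hθs) (hne hs' hθs'), add_re, re_mul_ofReal, re_mul_ofReal]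
  refine ⟨((inSector_sq_one_add_mul_ofReal hs hθs hl1).inv.mul_ofReal hst).add
    ((inSector_sq_one_add_mul_ofReal hs' hθs' hl1).inv.mul_ofReal ht), ?_⟩
  nlinarith [mul_le_mul_of_nonneg_right (le_re_inv_sq_one_add_mul_ofReal hs hθs hl1) hst,
    mul_le_mul_of_nonneg_right (le_re_inv_sq_one_add_mul_ofReal hs' hθs' hl1) ht]

end SymbolSectors

theorem sq_add_two_mul_lt_one_of_lt_tan_pi_div_eight {l : ℝ} (hl0 : 0 ≤ l)
    (hl : l < Real.tan (π / 8)) : l ^ 2 + 2 * l < 1 := by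
  have ht0 : 0 < Real.tan (π / 8) :=
    Real.tan_pos_of_pos_of_lt_pi_div_two (by positivity) (by linarith [pi_pos])
  have ht : Real.tan (π / 8) ^ 2 + 2 * Real.tan (π / 8) = 1 := by
    have h := Real.tan_two_mul (x := π / 8)
    rw [show 2 * (π / 8) = π / 4 by ring, Real.tan_pi_div_four] at h
    have hne : 1 - Real.tan (π / 8) ^ 2 ≠ 0 := fun h0 => by simp [h0] at h
    field_simp at h
    linarith
  nlinarith

theorem exists_lt_forall_le_of_eq_zero_of_gt {f : ℝ → ℝ} {c t₁ : ℝ} (hf : Continuous f)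
    (hlt : ∀ t ≥ 0, f t < c) (hzero : ∀ t > t₁, f t = 0) : ∃ B < c, ∀ t ≥ 0, f t ≤ B := by
  set T := max t₁ 0 + 1
  have hT0 : 0 ≤ T := by positivity
  have hT : t₁ < T := by linarith [le_max_left t₁ 0]
  obtain ⟨tm, htm, hmax⟩ :=
    isCompact_Icc.exists_isMaxOn (Set.nonempty_Icc.mpr hT0) hf.continuousOn
  refine ⟨f tm, hlt tm htm.1, fun t ht => ?_⟩
  rcases le_or_gt t T with htT | htT
  · exact hmax ⟨ht, htT⟩
  · rw [hzero t (hT.trans htT), ← hzero T hT]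
    exact hmax ⟨hT0, le_rfl⟩

theorem exists_lt_forall_div_mem_Icc_and_deriv_mem_Icc {ρ : ℝ → ℝ} {a c : ℝ}
    (hρ : ContDiff ℝ 1 ρ) (hρ0 : ρ 0 = 0) (hconst : ∃ t₁, ∀ t ≥ t₁, ρ t = a)
    (hρ' : ∀ t ≥ 0, 0 ≤ deriv ρ t ∧ deriv ρ t < c) :
    ∃ B < c, ∀ t ≥ 0, ρ t / t ∈ Set.Icc 0 B ∧ deriv ρ t ∈ Set.Icc 0 B := by
  obtain ⟨t₁, ht₁⟩ := hconst
  have hdiff : Differentiable ℝ ρ := hρ.differentiable one_ne_zero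
  obtain ⟨B, hBc, hB⟩ := exists_lt_forall_le_of_eq_zero_of_gt (hρ.continuous_deriv le_rfl)
    (fun t ht => (hρ' t ht).2) (t₁ := t₁) fun t ht => by
      have : ρ =ᶠ[nhds t] fun _ => a :=
        eventually_of_mem (Ioi_mem_nhds ht) fun x (hx : t₁ < x) => ht₁ x hx.le
      rw [this.deriv_eq, deriv_const]
  refine ⟨B, hBc, fun t ht => ⟨⟨?_, ?_⟩, (hρ' t ht).1, hB t ht⟩⟩
  · have := (convex_Ici (0 : ℝ)).mul_sub_le_image_sub_of_le_deriv hdiff.continuous.continuousOn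
      hdiff.differentiableOn (fun x hx => (hρ' x (interior_subset hx)).1) 0 Set.self_mem_Ici t ht ht
    rw [hρ0] at this
    exact div_nonneg (by linarith) ht
  · have := (convex_Ici (0 : ℝ)).image_sub_le_mul_sub_of_deriv_le hdiff.continuous.continuousOn
      hdiff.differentiableOn (fun x hx => hB x (interior_subset hx)) 0 Set.self_mem_Ici t ht ht
    rw [hρ0] at this
    exact div_le_of_le_mul₀ ht (hB t ht |>.trans' (hρ' t ht).1) (by linarith)

end

/-- equation (3.20) of the paper; semiclassical ellipticity of the
principal symbol.  There is `C > 0` such that for all `θ ∈ D_γ`, all `z` with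
`|z| > 1` and `π/2 < arg z < π`, and all `(ξ, ξ*) ∈ ℝⁿ × ℝⁿ`,
`|φ_θ(ξ)·φ_θ(ξ) - z - i (Dφ_θ(ξ)⁻² ξ*)·ξ*| ≥ C (1 + |ξ|² + |ξ*|²)`. -/
theorem principal_symbol_elliptic
    (n : ℕ) (γ : ℝ) (hγ : 0 < γ)
    (ρ : ℝ → ℝ) (hρ : ContDiff ℝ (⊤ : ℕ∞) ρ)
    (hρ0 : ∃ t₀ > 0, ∀ t ≤ t₀, ρ t = 0)
    (hρ1 : ∃ t₁ : ℝ, ∀ t ≥ t₁, ρ t = 1)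
    (hρ' : ∀ t ≥ (0:ℝ), 0 ≤ deriv ρ t ∧ deriv ρ t < γ⁻¹ * Real.tan (π/8)) :
    ∃ C > 0, ∀ θ ∈ Dgamma γ, ∀ z : ℂ, 1 < ‖z‖ → π/2 < z.arg → z.arg < π →
      ∀ ξ ξs : Rn n,
        C * (1 + ‖ξ‖ ^ 2 + ‖ξs‖ ^ 2)
          ≤ ‖
              (dotC (phiTheta ρ θ ξ) (phiTheta ρ θ ξ) - z
                - Complex.I * qForm ρ θ ξ ξs)‖ := by
  obtain ⟨t₀, ht₀, hρt₀⟩ := hρ0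
  obtain ⟨B, hBc, hB⟩ := exists_lt_forall_div_mem_Icc_and_deriv_mem_Icc
    (hρ.of_le (by exact_mod_cast le_top)) (hρt₀ 0 ht₀.le) hρ1 hρ'
  set l := γ * B
  have hl0 : 0 ≤ l := mul_nonneg hγ.le ((hB 0 le_rfl).2.1.trans (hB 0 le_rfl).2.2)
  have hl : l ^ 2 + 2 * l < 1 :=
    sq_add_two_mul_lt_one_of_lt_tan_pi_div_eight hl0 ((lt_inv_mul_iff₀ hγ).mp hBc)
  have hl1 : l < 1 := by nlinarith
  set k := 2 * l / (1 - l ^ 2)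
  have hk : k < 1 := by rw [div_lt_one (by nlinarith)]; linarith
  set d₁ := 1 / ((1 + k ^ 2) * (1 + l) ^ 2)
  set d₂ := (1 - l ^ 2) * (1 - l) ^ 2
  set c := min ((1 - k) * min d₁ d₂) 1
  have hc : 0 < c :=
    lt_min (mul_pos (by linarith) (lt_min (by positivity) (by nlinarith))) one_pos
  have hc₁ : c ≤ (1 - k) * d₁ :=
    (min_le_left _ _).trans (mul_le_mul_of_nonneg_left (min_le_left _ _) (by linarith))
  have hc₂ : c ≤ (1 - k) * d₂ :=
    (min_le_left _ _).trans (mul_le_mul_of_nonneg_left (min_le_right _ _) (by linarith))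
  refine ⟨c / 2, half_pos hc, fun θ hθ z hz harg₁ harg₂ ξ ξs => ?_⟩
  have hθB : ∀ s ∈ Set.Icc 0 B, (|θ.re| + |θ.im|) * s ≤ l := fun s hs =>
    mul_le_mul (le_of_lt hθ) hs.2 hs.1 hγ.le
  obtain ⟨hs, hs'⟩ := hB ‖ξ‖ (norm_nonneg ξ)
  obtain ⟨ha, ha_re⟩ := inSector_and_le_re_dotC_phiTheta_self ξ hs.1 (hθB _ hs) hl1
  obtain ⟨hb, hb_re⟩ := inSector_and_le_re_qForm ξ ξs hs.1 (hθB _ hs) hs'.1 (hθB _ hs') hl1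
  have hzre : z.re ≤ 0 := by
    by_contra! h
    linarith [le_abs_self z.arg, abs_arg_le_pi_div_two_iff.mpr h.le]
  have hzim : 0 ≤ z.im := arg_nonneg_iff.mp (by linarith [pi_pos])
  have key := ha.le_two_mul_norm_sub_sub_I_mul hb hzre hzim
  nlinarith [min_le_right ((1 - k) * min d₁ d₂) 1, mul_le_mul_of_nonneg_right hc₁ (sq_nonneg ‖ξs‖),
    mul_le_mul_of_nonneg_right hc₂ (sq_nonneg ‖ξ‖)]
end
end

section
/- Let β > 0 and ρ ∈ C^∞([0,∞);ℝ) be non-decreasing with βρ'(x) < tan(π/8) for all x ≥ 0 and ρ(0) = 0 (so also βρ(x)/x < tan(π/8) for x > 0). Then the function S(x) = x² - 2βxρ(x) - β²ρ(x)² is strictly increasing on (0, ∞); consequently, if S(x) < S(t) for x, t > 0 then x < t and βtρ(t) ≥ βxρ(x). -/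
open Real Set

theorem Real.tan_pi_div_eight_sq_add_two_mul : tan (π / 8) ^ 2 + 2 * tan (π / 8) = 1 := by
  have hcos : cos (π / 8) ≠ 0 :=
    (cos_pos_of_mem_Ioo ⟨by linarith [pi_pos], by linarith [pi_pos]⟩).ne'
  have hdouble : 2 * sin (π / 8) * cos (π / 8) = cos (π / 8) ^ 2 - sin (π / 8) ^ 2 := by
    rw [← sin_two_mul, ← cos_two_mul', show 2 * (π / 8) = π / 4 by ring,
      sin_pi_div_four, cos_pi_div_four]
  rw [tan_eq_sin_div_cos]
  field_simp
  linarith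

theorem Real.tan_pi_div_eight_pos : 0 < tan (π / 8) :=
  tan_pos_of_pos_of_lt_pi_div_two (by positivity) (by linarith [pi_pos])

theorem lt_mul_of_deriv_lt_of_map_zero {f : ℝ → ℝ} {c : ℝ} (hf : ContinuousOn f (Ici 0))
    (hf' : DifferentiableOn ℝ f (Ioi 0)) (hf0 : f 0 = 0) (hderiv : ∀ x > 0, deriv f x < c)
    {x : ℝ} (hx : 0 < x) : f x < c * x := by
  have h := (convex_Ici (0 : ℝ)).image_sub_lt_mul_sub_of_deriv_lt hf
    (by rwa [interior_Ici]) (by rw [interior_Ici]; exact hderiv)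
    0 self_mem_Ici x hx.le hx
  simpa [hf0] using h

theorem hasDerivAt_sq_sub_two_mul_sub_sq {β ρ' x : ℝ} {ρ : ℝ → ℝ} (hρ : HasDerivAt ρ ρ' x) :
    HasDerivAt (fun x : ℝ => x ^ 2 - 2 * β * x * ρ x - β ^ 2 * ρ x ^ 2)
      (2 * (x - β * ρ x - β * ρ' * (x + β * ρ x))) x := by
  refine (((hasDerivAt_pow 2 x).fun_sub
    (((hasDerivAt_id' x).const_mul (2 * β)).fun_mul hρ)).fun_sub
    ((hρ.fun_pow 2).const_mul (β ^ 2))).congr_deriv ?_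
  push_cast
  ring

/-- With `b = βρ(x) < Tx` and `d = βρ'(x) < T`, the derivative `2(x - b - d(x + b))` of `S`
exceeds `2x(1 - 2T - T²)`, which vanishes for `T = tan (π/8)`. -/
theorem sub_sub_mul_add_pos_of_lt_tan_pi_div_eight {x b d : ℝ} (hx : 0 < x) (hb : 0 ≤ b)
    (hbx : b < tan (π / 8) * x) (hd : d < tan (π / 8)) : 0 < x - b - d * (x + b) := by
  have hT := tan_pi_div_eight_sq_add_two_mul
  have hT0 := tan_pi_div_eight_pos
  have hdx : d * (x + b) < tan (π / 8) * (x + b) := by gcongr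
  nlinarith

theorem strictMonoOn_sq_sub_two_mul_sub_sq {β : ℝ} {ρ : ℝ → ℝ} (hβ : 0 ≤ β)
    (hρ : Differentiable ℝ ρ) (hρ0 : ρ 0 = 0) (hρ_nonneg : ∀ x > 0, 0 ≤ ρ x)
    (hρ' : ∀ x > 0, β * deriv ρ x < tan (π / 8)) :
    StrictMonoOn (fun x : ℝ => x ^ 2 - 2 * β * x * ρ x - β ^ 2 * ρ x ^ 2) (Ioi 0) := by
  have hderiv x := hasDerivAt_sq_sub_two_mul_sub_sq (β := β) (hρ x).hasDerivAt
  refine strictMonoOn_of_deriv_pos (convex_Ioi 0)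
    (fun x _ => (hderiv x).continuousAt.continuousWithinAt) fun x hx => ?_
  rw [interior_Ioi] at hx
  have hβρ : β * ρ x < tan (π / 8) * x :=
    lt_mul_of_deriv_lt_of_map_zero (hρ.const_mul β).continuous.continuousOn
      (hρ.const_mul β).differentiableOn (by simp [hρ0])
      (fun y hy => by simpa [deriv_const_mul_field'] using hρ' y hy) hx
  rw [(hderiv x).deriv]
  have := sub_sub_mul_add_pos_of_lt_tan_pi_div_eight hx
    (mul_nonneg hβ (hρ_nonneg x hx)) hβρ (hρ' x hx)
  exact mul_pos two_pos this

/-- monotonicity of `S(x) = x² - 2βxρ(x) - β²ρ(x)²`, from the proof of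
Proposition 3.2 of the paper.  If `ρ` is smooth, non-decreasing, `ρ(0) = 0`, and
`βρ'(x) < tan(π/8)` for all `x ≥ 0`, then `S` is strictly increasing on `(0, ∞)`;
consequently `S(x) < S(t)` for `x, t > 0` implies `x < t` and `βxρ(x) ≤ βtρ(t)`. -/
theorem S_strict_mono
    (β : ℝ) (hβ : 0 < β)
    (ρ : ℝ → ℝ) (hρ : ContDiff ℝ (⊤ : ℕ∞) ρ) (hmono : Monotone ρ) (hρ0 : ρ 0 = 0)
    (hρ' : ∀ x ≥ (0:ℝ), β * deriv ρ x < Real.tan (π/8)) :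
    StrictMonoOn (fun x : ℝ => x ^ 2 - 2*β*x*ρ x - β ^ 2 * (ρ x) ^ 2) (Set.Ioi 0)
      ∧ ∀ x t : ℝ, 0 < x → 0 < t →
          x ^ 2 - 2*β*x*ρ x - β ^ 2 * (ρ x) ^ 2
            < t ^ 2 - 2*β*t*ρ t - β ^ 2 * (ρ t) ^ 2 →
          x < t ∧ β*x*ρ x ≤ β*t*ρ t := by
  have hρ_nonneg : ∀ x > 0, 0 ≤ ρ x := fun x hx => hρ0 ▸ hmono hx.le
  have hS := strictMonoOn_sq_sub_two_mul_sub_sq hβ.le (hρ.differentiable (by simp)) hρ0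
    hρ_nonneg fun x hx => hρ' x hx.le
  refine ⟨hS, fun x t hx ht hlt => ?_⟩
  have hxt : x < t := (hS.lt_iff_lt hx ht).1 hlt
  refine ⟨hxt, ?_⟩
  have := hρ_nonneg x hx
  have := hmono hxt.le
  gcongr
end
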